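/- Let p ≥ 2 be an integer. Consider real numbers x_1, …, x_p satisfying: x_j ≥ 0 for all j; x_1 ≤ 1; x_{i−1} + x_i − x_{i−2} − x_{i+1} ≥ −2 for all 1 ≤ i ≤ p−1; and x_p − x_{p−2} ≥ −1 (variables with index outside {1,…,p} denote 0). Then x_p − x_{p−2} ≤ 2p − 1, and this bound is attained by some point of the polyhedron. -/
import Mathlib


/-- Feasibility for the linear program of case 32 with `Γ` supported on `γ_1`:
variables `x 1, …, x p` (indices outside this range denote `0`), all nonnegative,
`x 1 ≤ 1`, `x (i-1) + x i - x (i-2) - x (i+1) ≥ -2` for `1 ≤ i ≤ p-1`, and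
`x p - x (p-2) ≥ -1`. -/
def Feasible2 (p : ℕ) (x : ℤ → ℝ) : Prop :=
  (∀ j : ℤ, (j < 1 ∨ (p : ℤ) < j) → x j = 0) ∧
  (∀ j : ℤ, 1 ≤ j → j ≤ (p : ℤ) → 0 ≤ x j) ∧
  x 1 ≤ 1 ∧
  (∀ i : ℤ, 1 ≤ i → i ≤ (p : ℤ) - 1 →
    x (i - 1) + x i - x (i - 2) - x (i + 1) ≥ -2) ∧
  x (p : ℤ) - x ((p : ℤ) - 2) ≥ -1

theorem stmt_2 (p : ℕ) (hp : 2 ≤ p) :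
    IsGreatest {v : ℝ | ∃ x : ℤ → ℝ, Feasible2 p x ∧ v = x (p : ℤ) - x ((p : ℤ) - 2)}
      (2 * (p : ℝ) - 1) := by
  have hp2 : (2 : ℤ) ≤ (p : ℤ) := by exact_mod_cast hp
  constructor
  · -- membership
    set x : ℤ → ℝ := fun j => if 1 ≤ j ∧ j ≤ (p : ℤ) then ((j : ℝ) * ((j : ℝ) + 1)) / 2 else 0
      with hxdef
    have hval : ∀ j : ℤ, -1 ≤ j → j ≤ (p : ℤ) → x j = ((j : ℝ) * ((j : ℝ) + 1)) / 2 := by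
      intro j h1 h2
      by_cases h : 1 ≤ j
      · simp [hxdef, h, h2]
      · have hj : j = -1 ∨ j = 0 := by omega
        rcases hj with rfl | rfl <;> simp [hxdef]
    refine ⟨x, ⟨?_, ?_, ?_, ?_, ?_⟩, ?_⟩
    · intro j hj
      have : ¬ (1 ≤ j ∧ j ≤ (p : ℤ)) := by omega
      simp [hxdef, this]
    · intro j h1 h2
      rw [hval j (by omega) h2]
      have hj : (1 : ℝ) ≤ (j : ℝ) := by exact_mod_cast h1
      nlinarith
    · rw [hval 1 (by norm_num) (by omega)]; norm_num
    · intro i h1 h2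
      rw [hval (i - 1) (by omega) (by omega), hval i (by omega) (by omega),
        hval (i - 2) (by omega) (by omega), hval (i + 1) (by omega) (by omega)]
      push_cast
      ring_nf
      nlinarith [sq_nonneg ((i : ℝ))]
    · rw [hval (p : ℤ) (by omega) le_rfl, hval ((p : ℤ) - 2) (by omega) (by omega)]
      have hpr : (2 : ℝ) ≤ (p : ℝ) := by exact_mod_cast hp
      push_cast
      nlinarith
    · rw [hval (p : ℤ) (by omega) le_rfl, hval ((p : ℤ) - 2) (by omega) (by omega)]
      push_cast
      ring
  · -- upper bound
    rintro v ⟨x, ⟨hz, hnn, h1, hc, _⟩, rfl⟩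
    have key : ∀ n : ℕ, 1 ≤ n → (n : ℤ) ≤ (p : ℤ) →
        x (n : ℤ) - x ((n : ℤ) - 2) ≤ 2 * (n : ℝ) - 1 := by
      intro n
      induction n with
      | zero => intro h; omega
      | succ n ih =>
        intro _ hle
        rcases Nat.eq_zero_or_pos n with rfl | h1'
        · have hm1 : x (-1) = 0 := hz _ (Or.inl (by norm_num))
          push_cast
          rw [hm1]
          linarith
        · have hcon := hc (n : ℤ) (by exact_mod_cast h1') (by push_cast at hle ⊢; omega)
          have hih := ih h1' (by push_cast at hle ⊢; omega)
          push_cast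
          have e : x ((n : ℤ) + 1 - 2) = x ((n : ℤ) - 1) := by
            congr 1; ring
          rw [e]
          have hn : (1 : ℝ) ≤ (n : ℝ) := by exact_mod_cast h1'
          linarith
    have := key p (by omega) le_rfl
    linarith
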